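/- arXiv:1905.03054 — 4 statements merged into one kernel-verified Lean document; each statement's English description precedes it below -/
import Mathlib

section
/- Let f ∈ ℂ[z₁,z₂] be a homogeneous polynomial of degree d ≥ 1 and let (a,b) ∈ S³, i.e. |a|² + |b|² = 1, with f(a,b) ≠ 0. Then the set {(a·z/|z|, b·z/|z|) : z ∈ ℂ, z ≠ 0, f(az, bz) = 1} ⊂ S³ has exactly d elements. (The radial projection to S³ of the affine curve {f = 1} meets the Hopf fibre through (a,b) in exactly d points.) -/
/-!
By homogeneity `f (a z, b z) = z ^ d * f (a, b)`, so the admissible `z` are the `d` distinct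
`d`-th roots of `f (a, b)⁻¹`. These all have the same modulus, hence distinct phases `z / |z|`,
and since `(a, b) ≠ 0` (otherwise `f (a, b) = 0`) distinct phases give distinct points
`(z / |z|) • (a, b)` of the fibre.
-/

open MvPolynomial

theorem MvPolynomial.IsHomogeneous.eval_smul {σ R : Type*} [CommSemiring R]
    {φ : MvPolynomial σ R} {n : ℕ} (hφ : φ.IsHomogeneous n) (r : R) (x : σ → R) :
    eval (r • x) φ = r ^ n * eval x φ := by
  simp only [eval_eq, Finset.mul_sum, Pi.smul_apply, smul_eq_mul, mul_pow,
    Finset.prod_mul_distrib]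
  refine Finset.sum_congr rfl fun s hs => ?_
  rw [Finset.prod_pow_eq_pow_sum, ← hφ.degree_eq_sum_deg_support hs]
  ring

theorem IsPrimitiveRoot.ncard_setOf_pow_eq {R : Type*} [CommRing R] [IsDomain R] {ζ : R} {n : ℕ}
    (hζ : IsPrimitiveRoot ζ n) (hn : 0 < n) {c : R} (hc : c ≠ 0) (h : ∃ α, α ^ n = c) :
    {z : R | z ^ n = c}.ncard = n := by
  classical
  have hroots : {z : R | z ^ n = c} = (Polynomial.nthRoots n c).toFinset := by
    ext z
    simp [Polynomial.mem_nthRoots hn]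
  rw [hroots, Set.ncard_coe_finset, Multiset.toFinset_card_of_nodup (hζ.nthRoots_nodup hc),
    hζ.card_nthRoots, if_pos h]

theorem Complex.ncard_setOf_pow_eq {n : ℕ} (hn : n ≠ 0) {c : ℂ} (hc : c ≠ 0) :
    {z : ℂ | z ^ n = c}.ncard = n :=
  (Complex.isPrimitiveRoot_exp n hn).ncard_setOf_pow_eq (Nat.pos_of_ne_zero hn) hc
    (IsAlgClosed.exists_pow_nat_eq c (Nat.pos_of_ne_zero hn))

theorem Complex.injOn_div_norm_setOf_pow_eq {n : ℕ} (hn : n ≠ 0) (c : ℂ) :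
    Set.InjOn (fun z : ℂ => z / ‖z‖) {z | z ^ n = c} := by
  intro z hz w hw hzw
  have hnorm : ‖z‖ = ‖w‖ :=
    (pow_left_inj₀ (norm_nonneg z) (norm_nonneg w) hn).mp (by rw [← norm_pow, ← norm_pow, hz, hw])
  rcases eq_or_ne z 0 with rfl | hz0
  · exact (norm_eq_zero.mp (hnorm ▸ norm_zero)).symm
  have hnorm0 : (‖z‖ : ℂ) ≠ 0 := by simpa using hz0
  simp only [hnorm] at hzw hnorm0
  exact (div_left_inj' hnorm0).mp hzw

theorem stmt2_general (d : ℕ) (hd : 1 ≤ d) (f : MvPolynomial (Fin 2) ℂ)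
    (hf : f.IsHomogeneous d) (a b : ℂ)
    (hfab : MvPolynomial.eval ![a, b] f ≠ 0) :
    {p : ℂ × ℂ | ∃ z : ℂ, z ≠ 0 ∧ MvPolynomial.eval ![a * z, b * z] f = 1 ∧
      p = (a * (z / (‖z‖ : ℂ)), b * (z / (‖z‖ : ℂ)))}.ncard = d := by
  have hd0 : d ≠ 0 := Nat.one_le_iff_ne_zero.mp hd
  have hscale (z : ℂ) : eval ![a * z, b * z] f = z ^ d * eval ![a, b] f := by
    simp [← hf.eval_smul, mul_comm z]
  have hab : (a, b) ≠ 0 := by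
    rintro hab
    obtain ⟨rfl, rfl⟩ := Prod.mk_eq_zero.mp hab
    apply hfab
    simpa [zero_pow hd0] using hscale 0
  have hset : {p : ℂ × ℂ | ∃ z : ℂ, z ≠ 0 ∧ eval ![a * z, b * z] f = 1 ∧
      p = (a * (z / (‖z‖ : ℂ)), b * (z / (‖z‖ : ℂ)))} =
      ((· • (a, b)) ∘ fun z : ℂ => z / ‖z‖) '' {z | z ^ d = (eval ![a, b] f)⁻¹} := by
    ext p
    simp only [hscale, mul_eq_one_iff_eq_inv₀ hfab, Set.mem_ofPred_eq, Set.mem_image,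
      Function.comp_apply, Prod.smul_mk, smul_eq_mul]
    constructor
    · rintro ⟨z, -, hz, rfl⟩
      exact ⟨z, hz, by simp only [mul_comm]⟩
    · rintro ⟨z, hz, rfl⟩
      exact ⟨z, ne_zero_pow hd0 (hz ▸ inv_ne_zero hfab), hz, by simp only [mul_comm]⟩
  rw [hset, Set.InjOn.ncard_image
    ((smul_left_injective ℂ hab).comp_injOn (Complex.injOn_div_norm_setOf_pow_eq hd0 _)),
    Complex.ncard_setOf_pow_eq hd0 (inv_ne_zero hfab)]

/-- The radial projection to `S³` of the affine curve `{f = 1}` meets the Hopf fibre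
through `(a,b) ∈ S³` in exactly `d` points, provided `f(a,b) ≠ 0`. -/
theorem stmt2 (d : ℕ) (hd : 1 ≤ d) (f : MvPolynomial (Fin 2) ℂ)
    (hf : f.IsHomogeneous d) (a b : ℂ)
    (hab : ‖a‖ ^ 2 + ‖b‖ ^ 2 = 1)
    (hfab : MvPolynomial.eval ![a, b] f ≠ 0) :
    {p : ℂ × ℂ | ∃ z : ℂ, z ≠ 0 ∧ MvPolynomial.eval ![a * z, b * z] f = 1 ∧
      p = (a * (z / (‖z‖ : ℂ)), b * (z / (‖z‖ : ℂ)))}.ncard = d :=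
  stmt2_general d hd f hf a b hfab
end

section
/- Let c ∈ ℂ ∖ {0}, let (a₁,b₁), …, (a_d,b_d) ∈ ℂ² ∖ {(0,0)} be pairwise non-proportional with a₁ ≠ 0, and let f(z₁,z₂) = c·∏_{j=1}^d (b_j z₁ − a_j z₂). For ε > 0 set w_ε = −c·ε·a₁²·∏_{j=2}^d (b_j a₁ − a_j b₁); note w_ε ≠ 0. Then there exists ε₀ > 0 such that for all ε ∈ (0,ε₀) and all θ ∈ ℝ: |e^{−iθ}·f(a₁, b₁ + ε a₁ e^{iθ}) − w_ε| < |w_ε|. (In particular, as θ makes one full turn around the simple zero [a₁:b₁] of f, the argument of f(a_θ,b_θ) along the small circle θ ↦ [a₁ : b₁ + ε a₁ e^{iθ}] makes exactly one complete turn.) -/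
/-!
Factor out the linear form vanishing at `[a₁:b₁]`: at `(a₁, b₁ + ε a₁ e^{iθ})` it equals
`-ε a₁² e^{iθ}`, so `e^{-iθ} f` is `-c ε a₁²` times a product of the other factors, each
perturbed by `O(ε)`. The unperturbed product `∏_{j≥2}(b_j a₁ - a_j b₁)` is nonzero by
non-proportionality, so for small `ε` the perturbed product lies in the open disc around it
of radius its modulus, uniformly in `θ`.
-/

open Finset

lemma exists_pos_forall_norm_prod_sub_sub_prod_lt {ι R : Type*} [Fintype ι] [NormedCommRing R]
    (s : Finset ι) (D : ι → R) {η : ℝ} (hη : 0 < η) :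
    ∃ δ > 0, ∀ x : ι → R, ‖x‖ < δ → ‖∏ j ∈ s, (D j - x j) - ∏ j ∈ s, D j‖ < η := by
  have hcont : Continuous fun x : ι → R => ∏ j ∈ s, (D j - x j) := by fun_prop
  simpa [dist_eq_norm] using Metric.continuous_iff.1 hcont 0 η hη

lemma sub_mul_ne_zero_of_not_proportional {K : Type*} [Field K] {a₀ b₀ a₁ b₁ : K}
    (ha₀ : a₀ ≠ 0) (h : ¬ ∃ t : K, (a₁, b₁) = (t * a₀, t * b₀)) :
    b₁ * a₀ - a₁ * b₀ ≠ 0 := by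
  refine fun hzero => h ⟨a₁ / a₀, ?_⟩
  ext
  · field_simp
  · field_simp
    linear_combination hzero

lemma inv_mul_prod_eq_neg_mul_prod_erase {ι K : Type*} [Fintype ι] [DecidableEq ι] [Field K]
    (c r e : K) (he : e ≠ 0) (a b : ι → K) (i : ι) :
    e⁻¹ * (c * ∏ j, (b j * a i - a j * (b i + r * a i * e))) =
      -c * r * a i ^ 2 * ∏ j ∈ univ.erase i, (b j * a i - a j * b i - r * a i * e * a j) := by
  rw [← mul_prod_erase univ _ (mem_univ i)]
  have hfactor : ∀ j, b j * a i - a j * (b i + r * a i * e) =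
      b j * a i - a j * b i - r * a i * e * a j := fun j => by ring
  simp only [hfactor]
  field_simp
  ring

theorem stmt10_general (n : ℕ) (c : ℂ) (hc : c ≠ 0) (a b : Fin (n + 1) → ℂ)
    (hnp : ∀ i j, i ≠ j → ¬ ∃ t : ℂ, (a i, b i) = (t * a j, t * b j))
    (ha0 : a 0 ≠ 0) :
    ∃ ε₀ : ℝ, 0 < ε₀ ∧ ∀ ε : ℝ, 0 < ε → ε < ε₀ →
      (-c * (ε : ℂ) * (a 0) ^ 2 *
          ∏ j ∈ Finset.univ.erase (0 : Fin (n + 1)), (b j * a 0 - a j * b 0)) ≠ 0 ∧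
      ∀ θ : ℝ,
        Norm.norm
          (Complex.exp (-(θ : ℂ) * Complex.I) *
              (c * ∏ j, (b j * a 0 -
                  a j * (b 0 + (ε : ℂ) * a 0 * Complex.exp ((θ : ℂ) * Complex.I))))
            - (-c * (ε : ℂ) * (a 0) ^ 2 *
                ∏ j ∈ Finset.univ.erase (0 : Fin (n + 1)), (b j * a 0 - a j * b 0)))
        < Norm.norm
            (-c * (ε : ℂ) * (a 0) ^ 2 *
              ∏ j ∈ Finset.univ.erase (0 : Fin (n + 1)), (b j * a 0 - a j * b 0)) := by
  have hD : ∏ j ∈ univ.erase 0, (b j * a 0 - a j * b 0) ≠ 0 :=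
    prod_ne_zero_iff.2 fun j hj =>
      sub_mul_ne_zero_of_not_proportional ha0 (hnp j 0 (ne_of_mem_erase hj))
  obtain ⟨δ, hδ, hprod⟩ := exists_pos_forall_norm_prod_sub_sub_prod_lt (univ.erase 0)
    (fun j => b j * a 0 - a j * b 0) (norm_pos_iff.2 hD)
  have ha : 0 < ‖a 0‖ * ‖a‖ :=
    mul_pos (norm_pos_iff.2 ha0) (norm_pos_iff.2 fun h => ha0 (by simp [h]))
  refine ⟨δ / (‖a 0‖ * ‖a‖), div_pos hδ ha, fun ε hε hεδ => ?_⟩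
  have hC : -c * (ε : ℂ) * a 0 ^ 2 ≠ 0 := by simp [hc, hε.ne', ha0]
  refine ⟨mul_ne_zero hC hD, fun θ => ?_⟩
  have hx : ‖(ε * a 0 * Complex.exp (θ * Complex.I)) • a‖ < δ := by
    rw [norm_smul, norm_mul, norm_mul, Complex.norm_real, Complex.norm_exp_ofReal_mul_I,
      Real.norm_of_nonneg hε.le, mul_one, mul_assoc]
    exact (lt_div_iff₀ ha).1 hεδ
  have hlt := hprod _ hx
  simp only [Pi.smul_apply, smul_eq_mul] at hlt
  rw [neg_mul, Complex.exp_neg, inv_mul_prod_eq_neg_mul_prod_erase _ _ _ (Complex.exp_ne_zero _),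
    ← mul_sub, norm_mul, norm_mul (-c * _ * _)]
  exact mul_lt_mul_of_pos_left hlt (norm_pos_iff.2 hC)

/-- Around a simple zero `[a₁:b₁]` (here the index `0`) of
`f(z₁,z₂) = c·∏ (b_j z₁ - a_j z₂)`, for small `ε > 0` and all `θ`, the value
`e^{-iθ}·f(a₁, b₁ + ε a₁ e^{iθ})` stays within distance `|w_ε|` of
`w_ε = -c·ε·a₁²·∏_{j≥2}(b_j a₁ - a_j b₁) ≠ 0`; in particular the argument of `f`
makes exactly one full turn along the small circle. -/
theorem stmt10 (n : ℕ) (c : ℂ) (hc : c ≠ 0) (a b : Fin (n + 1) → ℂ)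
    (hab : ∀ j, (a j, b j) ≠ (0, 0))
    (hnp : ∀ i j, i ≠ j → ¬ ∃ t : ℂ, (a i, b i) = (t * a j, t * b j))
    (ha0 : a 0 ≠ 0) :
    ∃ ε₀ : ℝ, 0 < ε₀ ∧ ∀ ε : ℝ, 0 < ε → ε < ε₀ →
      (-c * (ε : ℂ) * (a 0) ^ 2 *
          ∏ j ∈ Finset.univ.erase (0 : Fin (n + 1)), (b j * a 0 - a j * b 0)) ≠ 0 ∧
      ∀ θ : ℝ,
        Norm.norm
          (Complex.exp (-(θ : ℂ) * Complex.I) *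
              (c * ∏ j, (b j * a 0 -
                  a j * (b 0 + (ε : ℂ) * a 0 * Complex.exp ((θ : ℂ) * Complex.I))))
            - (-c * (ε : ℂ) * (a 0) ^ 2 *
                ∏ j ∈ Finset.univ.erase (0 : Fin (n + 1)), (b j * a 0 - a j * b 0)))
        < Norm.norm
            (-c * (ε : ℂ) * (a 0) ^ 2 *
              ∏ j ∈ Finset.univ.erase (0 : Fin (n + 1)), (b j * a 0 - a j * b 0)) :=
  stmt10_general n c hc a b hnp ha0
end

section
/- Let d ≥ 1 and 1 ≤ k ≤ d be integers, and let g₀, g₁, …, g_d : S³ → ℂ be continuous functions. For λ ∈ (0,1), t ∈ ℝ, q ∈ S³ define G^λ_k(t,q) = Σ_{ℓ=0}^d e^{(d−ℓ)t} λ^{k(d−ℓ)+ℓ(ℓ+1)/2} g_{d−ℓ}(q). Then for every ε > 0 there exists λ₀ ∈ (0,1) such that for all λ ∈ (0,λ₀), all t ∈ [0, −(3/4)·log λ], and all q ∈ S³: | G^λ_k(t,q) / (λ^{k(d−k)+k(k+1)/2} · e^{(d−k+1)t}) − (g_{d−k+1}(q) + e^{−t}·g_{d−k}(q)) | < ε.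 (The rescaled function converges uniformly to G⁺_k(t,q) = g_{d−k+1}(q) + e^{−t}g_{d−k}(q) on [0, −(3/4)log λ] × S³ as λ → 0.) -/
/-!
Dividing the `ℓ`-th summand by `λ^{k(d−k)+k(k+1)/2} e^{(d−k+1)t}` leaves the weight
`e^{xt} λ^{x(x+1)/2}` with `x = k − ℓ − 1`. The two summands `x = 0` and `x = −1` give the limit
`G⁺_k`. For `x ≥ 1` the bound `e^t ≤ λ^{−3/4}` turns the weight into `λ^{x²/2 − x/4} ≤ λ^{1/4}`, and for
`x ≤ −2` the weight is at most `λ^{x(x+1)/2} ≤ λ`. Since the `g_i` are bounded on the compact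
sphere, the error is `O(λ^{1/4})` uniformly in `t` and `q`.
-/

open Finset Real

theorem exists_pos_bound_of_continuous {ι X E : Type*} [TopologicalSpace X] [CompactSpace X]
    [SeminormedAddCommGroup E] (s : Finset ι) (f : ι → X → E) (hf : ∀ i ∈ s, Continuous (f i)) :
    ∃ M, 0 < M ∧ ∀ i ∈ s, ∀ x, ‖f i x‖ ≤ M := by
  have hcont : Continuous fun x => ∑ i ∈ s, ‖f i x‖ :=
    continuous_finsetSum s fun i hi => (hf i hi).norm
  obtain ⟨C, hC⟩ := isCompact_univ.exists_bound_of_continuousOn hcont.continuousOn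
  refine ⟨|C| + 1, by positivity, fun i hi x => ?_⟩
  calc ‖f i x‖ ≤ ∑ j ∈ s, ‖f j x‖ := single_le_sum (fun j _ => norm_nonneg (f j x)) hi
    _ ≤ ‖∑ j ∈ s, ‖f j x‖‖ := le_norm_self _
    _ ≤ |C| + 1 := by linarith [hC x (Set.mem_univ x), le_abs_self C]

theorem norm_sum_sub_add_le {ι E : Type*} [DecidableEq ι] [SeminormedAddCommGroup E]
    {s : Finset ι} {f : ι → E} {a b : ι} (ha : a ∈ s) (hb : b ∈ s) (hab : a ≠ b) {C : ℝ}
    (hC : 0 ≤ C) (hf : ∀ i ∈ s, i ≠ a → i ≠ b → ‖f i‖ ≤ C) :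
    ‖∑ i ∈ s, f i - (f a + f b)‖ ≤ s.card * C := by
  set r := (s.erase a).erase b
  have hsplit : ∑ i ∈ s, f i = f a + (f b + ∑ i ∈ r, f i) := by
    rw [add_sum_erase _ _ (mem_erase.2 ⟨hab.symm, hb⟩), add_sum_erase _ _ ha]
  have hr : ∀ i ∈ r, ‖f i‖ ≤ C := fun i hi => by
    obtain ⟨hib, hia, his⟩ : i ≠ b ∧ i ≠ a ∧ i ∈ s := by simpa [r] using hi
    exact hf i his hia hib
  have hcard : (r.card : ℝ) ≤ s.card :=
    Nat.cast_le.2 ((card_le_card (erase_subset _ _)).trans (card_le_card (erase_subset _ _)))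
  calc ‖∑ i ∈ s, f i - (f a + f b)‖ = ‖∑ i ∈ r, f i‖ := by rw [hsplit]; abel_nf
    _ ≤ ∑ i ∈ r, ‖f i‖ := norm_sum_le _ _
    _ ≤ r.card * C := by simpa using sum_le_card_nsmul r _ C hr
    _ ≤ s.card * C := mul_le_mul_of_nonneg_right hcard hC

section Weights

variable {lam t : ℝ}

theorem exp_mul_rpow_div_rpow_mul_exp (hlam : 0 < lam) (d k l : ℝ) :
    exp ((d - l) * t) * lam ^ (k * (d - l) + l * (l + 1) / 2) /
        (lam ^ (k * (d - k) + k * (k + 1) / 2) * exp ((d - k + 1) * t)) =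
      exp ((k - l - 1) * t) * lam ^ ((k - l - 1) * (k - l - 1 + 1) / 2) := by
  rw [mul_comm (lam ^ _) (exp _), mul_div_mul_comm, ← exp_sub, ← rpow_sub hlam]
  congr 2 <;> ring

theorem exp_mul_rpow_le_rpow_quarter (hlam0 : 0 < lam) (hlam1 : lam < 1) (ht0 : 0 ≤ t)
    (ht : t ≤ -(3 / 4) * log lam) {x : ℝ} (hx : 1 ≤ x ∨ x ≤ -2) :
    exp (x * t) * lam ^ (x * (x + 1) / 2) ≤ lam ^ (1 / 4 : ℝ) := by
  have hL : log lam < 0 := log_neg hlam0 hlam1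
  rw [rpow_def_of_pos hlam0, rpow_def_of_pos hlam0, ← exp_add, exp_le_exp]
  rcases hx with hx | hx
  · -- `x(x+1)/2 − 3x/4 − 1/4 = (2x+1)(x−1)/4`
    nlinarith [mul_le_mul_of_nonneg_left ht (by linarith : (0 : ℝ) ≤ x),
      mul_nonneg (by linarith : (0 : ℝ) ≤ 2 * x + 1) (by linarith : (0 : ℝ) ≤ x - 1)]
  · have hq : 1 / 4 ≤ x * (x + 1) / 2 := by nlinarith
    nlinarith [mul_nonpos_of_nonpos_of_nonneg (by linarith : x ≤ 0) ht0,
      mul_le_mul_of_nonpos_left hq hL.le]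

end Weights

theorem norm_rescaled_sub_le {d k : ℕ} (hk1 : 1 ≤ k) (hkd : k ≤ d) {a : ℕ → ℂ} {M : ℝ}
    (hM : 0 ≤ M) (ha : ∀ i ≤ d, ‖a i‖ ≤ M) {lam t : ℝ} (hlam0 : 0 < lam) (hlam1 : lam < 1)
    (ht0 : 0 ≤ t) (ht : t ≤ -(3 / 4) * log lam) :
    ‖(∑ ℓ ∈ range (d + 1),
          (exp (((d : ℝ) - ℓ) * t) : ℂ) *
            ((lam ^ ((k : ℝ) * ((d : ℝ) - ℓ) + ℓ * (ℓ + 1) / 2) : ℝ) : ℂ) * a (d - ℓ)) /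
        (((lam ^ ((k : ℝ) * ((d : ℝ) - k) + k * (k + 1) / 2) : ℝ) : ℂ) *
          (exp (((d : ℝ) - k + 1) * t) : ℂ))
      - (a (d - k + 1) + (exp (-t) : ℂ) * a (d - k))‖ ≤ (d + 1) * (M * lam ^ (1 / 4 : ℝ)) := by
  set x : ℕ → ℝ := fun ℓ => (k : ℝ) - ℓ - 1
  set f : ℕ → ℂ := fun ℓ => ((exp (x ℓ * t) * lam ^ (x ℓ * (x ℓ + 1) / 2) : ℝ) : ℂ) * a (d - ℓ)
  have hsum : (∑ ℓ ∈ range (d + 1),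
          (exp (((d : ℝ) - ℓ) * t) : ℂ) *
            ((lam ^ ((k : ℝ) * ((d : ℝ) - ℓ) + ℓ * (ℓ + 1) / 2) : ℝ) : ℂ) * a (d - ℓ)) /
        (((lam ^ ((k : ℝ) * ((d : ℝ) - k) + k * (k + 1) / 2) : ℝ) : ℂ) *
          (exp (((d : ℝ) - k + 1) * t) : ℂ)) = ∑ ℓ ∈ range (d + 1), f ℓ := by
    rw [sum_div]
    refine sum_congr rfl fun ℓ _ => ?_
    simp only [f, x]
    rw [← exp_mul_rpow_div_rpow_mul_exp (t := t) hlam0 d k ℓ]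
    push_cast
    ring
  have hx_pred : x (k - 1) = 0 := by simp [x, Nat.cast_sub hk1]
  have hf_pred : f (k - 1) = a (d - k + 1) := by
    simp [f, hx_pred, show d - (k - 1) = d - k + 1 by omega]
  have hf_self : f k = (exp (-t) : ℂ) * a (d - k) := by simp [f, x]
  have hbound : ∀ ℓ ∈ range (d + 1), ℓ ≠ k - 1 → ℓ ≠ k → ‖f ℓ‖ ≤ M * lam ^ (1 / 4 : ℝ) := by
    intro ℓ _ h1 h2
    have hx : 1 ≤ x ℓ ∨ x ℓ ≤ -2 := by
      rcases (by omega : ℓ + 2 ≤ k ∨ k + 1 ≤ ℓ) with h | h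
      · have : (ℓ : ℝ) + 2 ≤ k := by exact_mod_cast h
        exact Or.inl (by linarith)
      · have : (k : ℝ) + 1 ≤ ℓ := by exact_mod_cast h
        exact Or.inr (by linarith)
    rw [norm_mul, Complex.norm_real, norm_of_nonneg (by positivity), mul_comm]
    exact mul_le_mul (ha _ (by omega)) (exp_mul_rpow_le_rpow_quarter hlam0 hlam1 ht0 ht hx)
      (by positivity) hM
  rw [hsum, ← hf_pred, ← hf_self]
  simpa using norm_sum_sub_add_le (mem_range.2 (by omega)) (mem_range.2 (by omega))
    (by omega) (by positivity) hbound

theorem stmt17_general (d k : ℕ) (hk1 : 1 ≤ k) (hkd : k ≤ d)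
    (g : ℕ → Metric.sphere (0 : EuclideanSpace ℂ (Fin 2)) 1 → ℂ)
    (hg : ∀ i, i ≤ d → Continuous (g i)) :
    ∀ ε : ℝ, 0 < ε → ∃ lam0 : ℝ, 0 < lam0 ∧ lam0 < 1 ∧
      ∀ lam : ℝ, 0 < lam → lam < lam0 →
        ∀ t : ℝ, 0 ≤ t → t ≤ -(3 / 4) * Real.log lam →
          ∀ q : Metric.sphere (0 : EuclideanSpace ℂ (Fin 2)) 1,
            Norm.norm
              ((∑ ℓ ∈ Finset.range (d + 1),
                  (Real.exp (((d : ℝ) - ℓ) * t) : ℂ) *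
                    ((lam ^ ((k : ℝ) * ((d : ℝ) - ℓ) + ℓ * (ℓ + 1) / 2) : ℝ) : ℂ) *
                    g (d - ℓ) q) /
                (((lam ^ ((k : ℝ) * ((d : ℝ) - k) + k * (k + 1) / 2) : ℝ) : ℂ) *
                  (Real.exp (((d : ℝ) - k + 1) * t) : ℂ))
              - (g (d - k + 1) q + (Real.exp (-t) : ℂ) * g (d - k) q)) < ε := by
  intro ε hε
  obtain ⟨M, hM0, hM⟩ := exists_pos_bound_of_continuous (range (d + 1)) g
    fun i hi => hg i (mem_range_succ_iff.1 hi)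
  set c := ε / ((d + 1) * M)
  have hc : 0 < c := by positivity
  refine ⟨min (1 / 2) (c ^ 4), by positivity, (min_le_left _ _).trans_lt (by norm_num),
    fun lam hlam0 hlam t ht0 ht q => ?_⟩
  have hlam1 : lam < 1 := hlam.trans_le ((min_le_left _ _).trans (by norm_num))
  have hquarter : lam ^ (1 / 4 : ℝ) < c := by
    rw [one_div, rpow_inv_lt_iff_of_pos hlam0.le hc.le (by norm_num)]
    exact_mod_cast hlam.trans_le (min_le_right _ _)
  calc _ ≤ (d + 1) * (M * lam ^ (1 / 4 : ℝ)) :=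
        norm_rescaled_sub_le hk1 hkd hM0.le (fun i hi => hM i (mem_range.2 (by omega)) q)
          hlam0 hlam1 ht0 ht
    _ < (d + 1) * (M * c) := by gcongr
    _ = ε := by simp only [c]; field_simp

/-- Uniform convergence on `[0, −(3/4)log λ] × S³` of the rescaled function
`G^λ_k / (λ^{k(d−k)+k(k+1)/2} e^{(d−k+1)t})` to `G⁺_k(t,q) = g_{d−k+1}(q) + e^{−t} g_{d−k}(q)`
as `λ → 0⁺`. -/
theorem stmt17 (d k : ℕ) (hd : 1 ≤ d) (hk1 : 1 ≤ k) (hkd : k ≤ d)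
    (g : ℕ → Metric.sphere (0 : EuclideanSpace ℂ (Fin 2)) 1 → ℂ)
    (hg : ∀ i, i ≤ d → Continuous (g i)) :
    ∀ ε : ℝ, 0 < ε → ∃ lam0 : ℝ, 0 < lam0 ∧ lam0 < 1 ∧
      ∀ lam : ℝ, 0 < lam → lam < lam0 →
        ∀ t : ℝ, 0 ≤ t → t ≤ -(3 / 4) * Real.log lam →
          ∀ q : Metric.sphere (0 : EuclideanSpace ℂ (Fin 2)) 1,
            Norm.norm
              ((∑ ℓ ∈ Finset.range (d + 1),
                  (Real.exp (((d : ℝ) - ℓ) * t) : ℂ) *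
                    ((lam ^ ((k : ℝ) * ((d : ℝ) - ℓ) + ℓ * (ℓ + 1) / 2) : ℝ) : ℂ) *
                    g (d - ℓ) q) /
                (((lam ^ ((k : ℝ) * ((d : ℝ) - k) + k * (k + 1) / 2) : ℝ) : ℂ) *
                  (Real.exp (((d : ℝ) - k + 1) * t) : ℂ))
              - (g (d - k + 1) q + (Real.exp (-t) : ℂ) * g (d - k) q)) < ε :=
  stmt17_general d k hk1 hkd g hg
end

section
/- Let d ≥ 1 and 1 ≤ k ≤ d be integers, and let g₀, g₁, …, g_d : S³ → ℂ be continuous functions. For λ ∈ (0,1), t ∈ ℝ, q ∈ S³ define G^λ_k(t,q) = Σ_{ℓ=0}^d e^{(d−ℓ)t} λ^{k(d−ℓ)+ℓ(ℓ+1)/2} g_{d−ℓ}(q). Then for every ε > 0 there exists λ₀ ∈ (0,1) such that for all λ ∈ (0,λ₀), all t ∈ [(3/4)·log λ, 0], and all q ∈ S³: | G^λ_k(t,q) / (λ^{k(d−k)+k(k+1)/2} · e^{(d−k)t}) − (e^{t}·g_{d−k+1}(q) + g_{d−k}(q)) | < ε. (The rescaled function converges uniformly to G⁻_k(t,q) =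 e^{t}g_{d−k+1}(q) + g_{d−k}(q) on [(3/4)log λ, 0] × S³ as λ → 0.) -/
/-!
After dividing by the weight of the `ℓ = k` term, the `ℓ`-th term of `G^λ_k` carries the factor
`e^{-jt} λ^{j(j+1)/2}` with `j = ℓ - k`. This factor is `1` for `j = 0` and `e^t` for `j = -1`,
which produce the limit, while for every other integer `j` it is at most `λ^{1/4}` on
`(3/4) log λ ≤ t ≤ 0`. Since the `g_i` are bounded on the compact sphere, the remaining terms
are uniformly `O(λ^{1/4})`.
-/

open Finset Real Filter Topology

noncomputable section

/-- The weight of the `ℓ = k + j` term of `G^λ_k` divided by that of the `ℓ = k` term. -/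
def rescaledWeight (lam t j : ℝ) : ℝ :=
  exp (-(j * t)) * lam ^ (j * (j + 1) / 2)

lemma rescaledWeight_zero (lam t : ℝ) : rescaledWeight lam t 0 = 1 := by
  simp [rescaledWeight]

lemma rescaledWeight_neg_one (lam t : ℝ) : rescaledWeight lam t (-1) = exp t := by
  simp [rescaledWeight]

lemma rescaledWeight_nonneg {lam : ℝ} (hlam : 0 ≤ lam) (t j : ℝ) : 0 ≤ rescaledWeight lam t j :=
  mul_nonneg (exp_pos _).le (rpow_nonneg hlam _)

lemma exp_mul_rpow_eq_rescaledWeight_mul {lam : ℝ} (hlam : 0 < lam) (d k ℓ t : ℝ) :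
    exp ((d - ℓ) * t) * lam ^ (k * (d - ℓ) + ℓ * (ℓ + 1) / 2)
      = rescaledWeight lam t (ℓ - k) * (lam ^ (k * (d - k) + k * (k + 1) / 2) * exp ((d - k) * t)) := by
  rw [rescaledWeight, show (d - ℓ) * t = -((ℓ - k) * t) + (d - k) * t by ring, exp_add,
    show k * (d - ℓ) + ℓ * (ℓ + 1) / 2
      = (ℓ - k) * (ℓ - k + 1) / 2 + (k * (d - k) + k * (k + 1) / 2) by ring,
    rpow_add hlam]
  ring

/-- On `(3/4) log λ ≤ t ≤ 0` the exponent of `λ` in `e^{-jt} λ^{j(j+1)/2}` is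
at least `j(2j-1)/4` for `j ≥ 1` and at least `j(j+1)/2` for `j ≤ -2`, both `≥ 1/4`. -/
lemma rescaledWeight_le_rpow_one_div_four {lam t : ℝ} (hlam : 0 < lam) (hlam1 : lam < 1)
    (ht₁ : 3 / 4 * log lam ≤ t) (ht₂ : t ≤ 0) {j : ℤ} (hj₀ : j ≠ 0) (hj₁ : j ≠ -1) :
    rescaledWeight lam t j ≤ lam ^ (1 / 4 : ℝ) := by
  rcases (show j ≤ -2 ∨ 1 ≤ j by omega) with hj | hj
  · have hj' : (j : ℝ) ≤ -2 := by exact_mod_cast hj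
    exact (mul_le_of_le_one_left (rpow_nonneg hlam.le _) (exp_le_one_iff.mpr (by nlinarith))).trans
      (rpow_le_rpow_of_exponent_ge hlam hlam1.le (by nlinarith))
  · have hj' : (1 : ℝ) ≤ j := by exact_mod_cast hj
    have hexp : exp (-(j * t)) ≤ lam ^ (-(3 / 4 * j) : ℝ) := by
      rw [rpow_def_of_pos hlam]
      exact exp_le_exp.mpr (by nlinarith)
    calc rescaledWeight lam t j
        ≤ lam ^ (-(3 / 4 * j) : ℝ) * lam ^ ((j : ℝ) * (j + 1) / 2) :=
          mul_le_mul_of_nonneg_right hexp (rpow_nonneg hlam.le _)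
      _ = lam ^ (-(3 / 4 * j) + (j : ℝ) * (j + 1) / 2) := (rpow_add hlam _ _).symm
      _ ≤ lam ^ (1 / 4 : ℝ) := rpow_le_rpow_of_exponent_ge hlam hlam1.le (by nlinarith)

lemma sum_div_sub_leading_eq_sum_rescaledWeight {d k : ℕ} (hk₁ : 1 ≤ k) (hkd : k ≤ d)
    {lam : ℝ} (hlam : 0 < lam) (t : ℝ) (a : ℕ → ℂ) :
    (∑ ℓ ∈ range (d + 1),
        (exp (((d : ℝ) - ℓ) * t) : ℂ) * ((lam ^ ((k : ℝ) * ((d : ℝ) - ℓ) + ℓ * (ℓ + 1) / 2) : ℝ) : ℂ)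
          * a ℓ) /
        (((lam ^ ((k : ℝ) * ((d : ℝ) - k) + k * (k + 1) / 2) : ℝ) : ℂ) *
          (exp (((d : ℝ) - k) * t) : ℂ))
      - ((exp t : ℂ) * a (k - 1) + a k)
      = ∑ ℓ ∈ ((range (d + 1)).erase k).erase (k - 1),
          (rescaledWeight lam t ((ℓ : ℝ) - k) : ℂ) * a ℓ := by
  set D : ℂ := ((lam ^ ((k : ℝ) * ((d : ℝ) - k) + k * (k + 1) / 2) : ℝ) : ℂ) *
    (exp (((d : ℝ) - k) * t) : ℂ)
  have hD : D ≠ 0 := mul_ne_zero (by exact_mod_cast (rpow_pos_of_pos hlam _).ne')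
    (by exact_mod_cast (exp_pos _).ne')
  have hterm : ∀ ℓ : ℕ, (exp (((d : ℝ) - ℓ) * t) : ℂ)
      * ((lam ^ ((k : ℝ) * ((d : ℝ) - ℓ) + ℓ * (ℓ + 1) / 2) : ℝ) : ℂ) * a ℓ / D
      = (rescaledWeight lam t ((ℓ : ℝ) - k) : ℂ) * a ℓ := by
    intro ℓ
    rw [div_eq_iff hD, ← Complex.ofReal_mul, exp_mul_rpow_eq_rescaledWeight_mul hlam]
    simp only [D, Complex.ofReal_mul]
    ring
  have hk : k ∈ range (d + 1) := mem_range.mpr (by omega)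
  have hk' : k - 1 ∈ (range (d + 1)).erase k := by
    rw [mem_erase, mem_range]
    omega
  have hcast : ((k - 1 : ℕ) : ℝ) - k = -1 := by
    rw [Nat.cast_sub hk₁]
    ring
  rw [sum_div, sum_congr rfl fun ℓ _ => hterm ℓ, ← add_sum_erase _ _ hk, ← add_sum_erase _ _ hk',
    sub_self, rescaledWeight_zero, hcast, rescaledWeight_neg_one]
  push_cast
  ring

lemma norm_sum_rescaledWeight_le {d k : ℕ} {lam t : ℝ} (hlam : 0 < lam) (hlam1 : lam < 1)
    (ht₁ : 3 / 4 * log lam ≤ t) (ht₂ : t ≤ 0) (a : ℕ → ℂ) :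
    ‖∑ ℓ ∈ ((range (d + 1)).erase k).erase (k - 1),
        (rescaledWeight lam t ((ℓ : ℝ) - k) : ℂ) * a ℓ‖
      ≤ lam ^ (1 / 4 : ℝ) * ∑ ℓ ∈ range (d + 1), ‖a ℓ‖ := by
  calc _ ≤ ∑ ℓ ∈ ((range (d + 1)).erase k).erase (k - 1), lam ^ (1 / 4 : ℝ) * ‖a ℓ‖ := by
        refine norm_sum_le_of_le _ fun ℓ hℓ => ?_
        rw [mem_erase, mem_erase] at hℓ
        rw [norm_mul, Complex.norm_real, norm_of_nonneg (rescaledWeight_nonneg hlam.le _ _)]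
        refine mul_le_mul_of_nonneg_right ?_ (norm_nonneg _)
        have := rescaledWeight_le_rpow_one_div_four hlam hlam1 ht₁ ht₂
          (j := (ℓ : ℤ) - k) (by omega) (by omega)
        exact_mod_cast this
    _ ≤ ∑ ℓ ∈ range (d + 1), lam ^ (1 / 4 : ℝ) * ‖a ℓ‖ :=
        sum_le_sum_of_subset_of_nonneg ((erase_subset _ _).trans (erase_subset _ _))
          fun _ _ _ => mul_nonneg (rpow_nonneg hlam.le _) (norm_nonneg _)
    _ = lam ^ (1 / 4 : ℝ) * ∑ ℓ ∈ range (d + 1), ‖a ℓ‖ := (mul_sum _ _ _).symm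

lemma exists_forall_rpow_mul_lt {p : ℝ} (hp : 0 < p) (M : ℝ) {ε : ℝ} (hε : 0 < ε) :
    ∃ lam0 : ℝ, 0 < lam0 ∧ lam0 < 1 ∧ ∀ lam : ℝ, 0 < lam → lam < lam0 → lam ^ p * M < ε := by
  have hlim : Tendsto (fun x : ℝ => x ^ p * M) (𝓝 0) (𝓝 0) := by
    simpa [zero_rpow hp.ne'] using ((continuous_rpow_const hp.le).tendsto 0).mul_const M
  obtain ⟨δ, hδ, hsmall⟩ := Metric.eventually_nhds_iff.mp (hlim.eventually (gt_mem_nhds hε))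
  refine ⟨min δ (1 / 2), by positivity, by norm_num [min_le_right], fun lam hlam hlt => hsmall ?_⟩
  rw [Real.dist_eq, sub_zero, abs_of_pos hlam]
  exact hlt.trans_le (min_le_left _ _)

end

theorem stmt18_general (d k : ℕ) (hk1 : 1 ≤ k) (hkd : k ≤ d)
    (g : ℕ → Metric.sphere (0 : EuclideanSpace ℂ (Fin 2)) 1 → ℂ)
    (hg : ∀ i, i ≤ d → Continuous (g i)) :
    ∀ ε : ℝ, 0 < ε → ∃ lam0 : ℝ, 0 < lam0 ∧ lam0 < 1 ∧
      ∀ lam : ℝ, 0 < lam → lam < lam0 →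
        ∀ t : ℝ, (3 / 4) * Real.log lam ≤ t → t ≤ 0 →
          ∀ q : Metric.sphere (0 : EuclideanSpace ℂ (Fin 2)) 1,
            ‖
              ((∑ ℓ ∈ Finset.range (d + 1),
                  (Real.exp (((d : ℝ) - ℓ) * t) : ℂ) *
                    ((lam ^ ((k : ℝ) * ((d : ℝ) - ℓ) + ℓ * (ℓ + 1) / 2) : ℝ) : ℂ) *
                    g (d - ℓ) q) /
                (((lam ^ ((k : ℝ) * ((d : ℝ) - k) + k * (k + 1) / 2) : ℝ) : ℂ) *
                  (Real.exp (((d : ℝ) - k) * t) : ℂ))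
              - ((Real.exp t : ℂ) * g (d - k + 1) q + g (d - k) q))‖ < ε := by
  intro ε hε
  have hcont : Continuous fun q => ∑ ℓ ∈ range (d + 1), ‖g (d - ℓ) q‖ :=
    continuous_finsetSum _ fun ℓ _ => (hg (d - ℓ) (Nat.sub_le d ℓ)).norm
  obtain ⟨M, hM⟩ := (isCompact_range hcont).bddAbove
  obtain ⟨lam0, hlam0, hlam01, hsmall⟩ := exists_forall_rpow_mul_lt (p := 1 / 4) (by norm_num) M hε
  refine ⟨lam0, hlam0, hlam01, fun lam hlam hlt t ht₁ ht₂ q => ?_⟩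
  have key := sum_div_sub_leading_eq_sum_rescaledWeight hk1 hkd hlam t fun ℓ => g (d - ℓ) q
  rw [show d - (k - 1) = d - k + 1 by omega] at key
  rw [key]
  calc _ ≤ lam ^ (1 / 4 : ℝ) * ∑ ℓ ∈ range (d + 1), ‖g (d - ℓ) q‖ :=
        norm_sum_rescaledWeight_le hlam (hlt.trans hlam01) ht₁ ht₂ _
    _ ≤ lam ^ (1 / 4 : ℝ) * M :=
        mul_le_mul_of_nonneg_left (hM (Set.mem_range_self q)) (rpow_nonneg hlam.le _)
    _ < ε := hsmall lam hlam hlt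

/-- Uniform convergence on `[(3/4)log λ, 0] × S³` of the rescaled function
`G^λ_k / (λ^{k(d−k)+k(k+1)/2} e^{(d−k)t})` to `G⁻_k(t,q) = e^{t} g_{d−k+1}(q) + g_{d−k}(q)`
as `λ → 0⁺`. -/
theorem stmt18 (d k : ℕ) (hd : 1 ≤ d) (hk1 : 1 ≤ k) (hkd : k ≤ d)
    (g : ℕ → Metric.sphere (0 : EuclideanSpace ℂ (Fin 2)) 1 → ℂ)
    (hg : ∀ i, i ≤ d → Continuous (g i)) :
    ∀ ε : ℝ, 0 < ε → ∃ lam0 : ℝ, 0 < lam0 ∧ lam0 < 1 ∧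
      ∀ lam : ℝ, 0 < lam → lam < lam0 →
        ∀ t : ℝ, (3 / 4) * Real.log lam ≤ t → t ≤ 0 →
          ∀ q : Metric.sphere (0 : EuclideanSpace ℂ (Fin 2)) 1,
            ‖
              ((∑ ℓ ∈ Finset.range (d + 1),
                  (Real.exp (((d : ℝ) - ℓ) * t) : ℂ) *
                    ((lam ^ ((k : ℝ) * ((d : ℝ) - ℓ) + ℓ * (ℓ + 1) / 2) : ℝ) : ℂ) *
                    g (d - ℓ) q) /
                (((lam ^ ((k : ℝ) * ((d : ℝ) - k) + k * (k + 1) / 2) : ℝ) : ℂ) *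
                  (Real.exp (((d : ℝ) - k) * t) : ℂ))
              - ((Real.exp t : ℂ) * g (d - k + 1) q + g (d - k) q))‖ < ε :=
  stmt18_general d k hk1 hkd g hg
end
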